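/- arXiv:1207.0466 — 2 statements merged into one kernel-verified Lean document; each statement's English description precedes it below -/
import Mathlib

section
/- Let R be a strongly J-*-clean ring. Then for every a ∈ R, the projection e with a - e ∈ J(R) and ae = ea is unique; that is, if e, f are projections with a - e ∈ J(R), a - f ∈ J(R), ae = ea, af = fa, then e = f. -/
/-!
An idempotent lying in `J(R)` is zero, since `1 - p` is then left invertible and kills `p`.
Hence two commuting idempotents `e, f` with `e - f ∈ J(R)` coincide: `e (1 - f)` and `f (1 - e)`
are idempotents in `J(R)`. In a strongly J-*-clean ring, decomposing an idempotent `a = g + u`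
shows `a = g`, so every idempotent is a projection. If `e` is a projection, `e + e x (1 - e)` is
idempotent, so it is a projection too, which forces `e x (1 - e) = 0`; applied to `e` and `1 - e`
this makes every idempotent central. The theorem follows, because projections `e, f` as in the
statement commute and `e - f = (a - f) - (a - e) ∈ J(R)`.
-/

/-- A *-ring `R` is strongly J-*-clean if every element is the sum of a projection
and an element of the Jacobson radical that commute. -/
def StronglyJStarClean (R : Type*) [Ring R] [StarRing R] : Prop :=
  ∀ a : R, ∃ e u : R, e * e = e ∧ star e = e ∧
    u ∈ Ideal.jacobson (⊥ : Ideal R) ∧ a = e + u ∧ a * e = e * a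

section Ring

variable {R : Type*} [Ring R]

theorem IsIdempotentElem.eq_zero_of_mem_jacobson_bot {p : R} (hp : IsIdempotentElem p)
    (hJ : p ∈ Ideal.jacobson (⊥ : Ideal R)) : p = 0 := by
  obtain ⟨z, hz⟩ := Ideal.mem_jacobson_iff.1 hJ (-1)
  rw [Ideal.mem_bot, sub_eq_zero] at hz
  have hz_inv : z * (1 - p) = 1 := by
    calc z * (1 - p) = z * -1 * p + z := by noncomm_ring
      _ = 1 := hz
  calc p = z * (1 - p) * p := by rw [hz_inv, one_mul]
    _ = 0 := by rw [mul_assoc, hp.one_sub_mul_self, mul_zero]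

theorem IsIdempotentElem.mul_one_sub_eq_zero_of_sub_mem_jacobson_bot {e f : R}
    (he : IsIdempotentElem e) (hf : IsIdempotentElem f) (hef : Commute e f)
    (hJ : e - f ∈ Ideal.jacobson (⊥ : Ideal R)) : e * (1 - f) = 0 := by
  have hc : Commute e (1 - f) := (Commute.one_right e).sub_right hef
  refine (he.mul_of_commute hc hf.one_sub).eq_zero_of_mem_jacobson_bot ?_
  have : e * (1 - f) * (e - f) = e * (1 - f) := by
    calc e * (1 - f) * (e - f) = e * (1 - f) * e - e * ((1 - f) * f) := by
          rw [mul_sub, mul_assoc e (1 - f) f]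
      _ = e * (1 - f) := by
          rw [mul_assoc, ← hc.eq, ← mul_assoc, he.eq, hf.one_sub_mul_self, mul_zero, sub_zero]
  rw [← this]
  exact Ideal.mul_mem_left _ _ hJ

theorem IsIdempotentElem.eq_of_commute_of_sub_mem_jacobson_bot {e f : R}
    (he : IsIdempotentElem e) (hf : IsIdempotentElem f) (hef : Commute e f)
    (hJ : e - f ∈ Ideal.jacobson (⊥ : Ideal R)) : e = f := by
  have hfe : f - e ∈ Ideal.jacobson (⊥ : Ideal R) := by
    simpa only [neg_sub] using neg_mem hJ
  have h₁ := he.mul_one_sub_eq_zero_of_sub_mem_jacobson_bot hf hef hJ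
  have h₂ := hf.mul_one_sub_eq_zero_of_sub_mem_jacobson_bot he hef.symm hfe
  rw [mul_one_sub, sub_eq_zero] at h₁ h₂
  rw [h₁, hef.eq, ← h₂]

end Ring

section StarRing

variable {R : Type*} [Ring R] [StarRing R]

theorem StronglyJStarClean.isSelfAdjoint_of_isIdempotentElem (h : StronglyJStarClean R) {a : R}
    (ha : IsIdempotentElem a) : IsSelfAdjoint a := by
  obtain ⟨g, u, hg, hgs, hu, rfl, hcomm⟩ := h a
  have hag : g + u = g := ha.eq_of_commute_of_sub_mem_jacobson_bot hg hcomm (by rwa [add_sub_cancel_left])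
  rw [IsSelfAdjoint, hag, hgs]

theorem mul_mul_one_sub_eq_zero_of_forall_isSelfAdjoint
    (hsa : ∀ p : R, IsIdempotentElem p → IsSelfAdjoint p) {e : R} (he : IsIdempotentElem e)
    (x : R) : e * x * (1 - e) = 0 := by
  set b := e * x * (1 - e) with hb
  clear_value b
  have heb : e * b = b := by rw [hb, ← mul_assoc, ← mul_assoc, he.eq]
  have hbe : b * e = 0 := by rw [hb, mul_assoc, he.one_sub_mul_self, mul_zero]
  have hidem : IsIdempotentElem (e + b) := by
    have hbb : b * b = 0 := by
      calc b * b = b * e * b := by rw [mul_assoc, heb]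
        _ = 0 := by rw [hbe, zero_mul]
    rw [IsIdempotentElem, add_mul, mul_add, mul_add, he.eq, heb, hbe, hbb, add_zero, add_zero]
  have hbs : star b = b := by
    have := (hsa _ hidem).star_eq
    rwa [star_add, (hsa e he).star_eq, add_right_inj] at this
  have hsb : star b = (1 - e) * (star x * e) := by
    rw [hb, star_mul, star_mul, star_sub, star_one, (hsa e he).star_eq]
  rw [← heb, ← hbs, hsb, ← mul_assoc, he.mul_one_sub_self, zero_mul]

theorem commute_of_forall_isSelfAdjoint
    (hsa : ∀ p : R, IsIdempotentElem p → IsSelfAdjoint p) {e : R} (he : IsIdempotentElem e)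
    (x : R) : Commute e x := by
  have h₁ := mul_mul_one_sub_eq_zero_of_forall_isSelfAdjoint hsa he x
  have h₂ := mul_mul_one_sub_eq_zero_of_forall_isSelfAdjoint hsa he.one_sub x
  rw [mul_one_sub, sub_eq_zero] at h₁
  rw [sub_sub_cancel, mul_assoc, one_sub_mul, sub_eq_zero] at h₂
  rw [Commute, SemiconjBy, h₁, h₂, mul_assoc]

end StarRing

theorem stmt_11 (R : Type*) [Ring R] [StarRing R] (h : StronglyJStarClean R) :
    ∀ a e f : R, e * e = e → star e = e → f * f = f → star f = f →
      a - e ∈ Ideal.jacobson (⊥ : Ideal R) → a - f ∈ Ideal.jacobson (⊥ : Ideal R) →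
      a * e = e * a → a * f = f * a → e = f := by
  intro a e f he _ hf _ heJ hfJ _ _
  have hef : Commute e f :=
    commute_of_forall_isSelfAdjoint (fun _ => h.isSelfAdjoint_of_isIdempotentElem) he f
  have hJ : e - f ∈ Ideal.jacobson (⊥ : Ideal R) := by
    simpa only [sub_sub_sub_cancel_left] using sub_mem hfJ heJ
  exact IsIdempotentElem.eq_of_commute_of_sub_mem_jacobson_bot he hf hef hJ
end

section
/- Let R be a strongly J-*-clean ring and let x ∈ R satisfy 1 + x x* ∈ U(R). Then x ∈ J(R). -/
/-!
Write `x = e + u` with `e` a projection and `u ∈ J(R)`. Since `e = e*`, the element `x x*`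
differs from `e` by `e u* + u x* ∈ J(R)`, so `1 + e` is a unit together with `1 + x x*`.
In a decomposition `-1 = f + w` the projection `f` is a unit, hence `f = 1` and
`2 = -w ∈ J(R)`. Then `e = (1 + e)⁻¹ (2 e) ∈ J(R)`, whence `x ∈ J(R)`.
-/

namespace Ideal

variable {R : Type*} [Ring R] {x a : R}

theorem mem_jacobson_bot_of_forall_isUnit_one_add_mul (h : ∀ y, IsUnit (1 + y * x)) :
    x ∈ jacobson (⊥ : Ideal R) := by
  refine mem_jacobson_iff.mpr fun y ↦ ?_
  obtain ⟨v, hv⟩ := h y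
  refine ⟨↑v⁻¹, mem_bot.mpr ?_⟩
  calc (↑v⁻¹ : R) * y * x + ↑v⁻¹ - 1 = ↑v⁻¹ * (1 + y * x) - 1 := by noncomm_ring
    _ = 0 := by rw [← hv, Units.inv_mul, sub_self]

theorem isUnit_one_add_of_mem_jacobson_bot (hx : x ∈ jacobson (⊥ : Ideal R)) :
    IsUnit (1 + x) := by
  have left_inv : ∀ j ∈ jacobson (⊥ : Ideal R), ∃ z : R, z * (1 + j) = 1 := fun j hj ↦ by
    obtain ⟨z, hz⟩ := mem_jacobson_iff.mp hj 1
    refine ⟨z, ?_⟩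
    rw [mem_bot, sub_eq_zero, mul_one] at hz
    rw [mul_add, mul_one, add_comm, hz]
  obtain ⟨z, hz⟩ := left_inv x hx
  -- `z = 1 - z x` is itself of the form `1 + j` with `j ∈ J`, so it has a left inverse `w`.
  have hz_eq : z = 1 + -(z * x) := by
    rw [mul_add, mul_one] at hz
    rw [← hz]; abel
  obtain ⟨w, hw⟩ := left_inv _ (neg_mem (mul_mem_left _ z hx))
  rw [← hz_eq] at hw
  have hw_eq : w = 1 + x := by
    calc w = w * (z * (1 + x)) := by rw [hz, mul_one]
      _ = 1 + x := by rw [← mul_assoc, hw, one_mul]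
  exact isUnit_iff_exists.mpr ⟨z, hw_eq ▸ hw, hz⟩

theorem _root_.IsUnit.add_mem_jacobson_bot {j : R} (ha : IsUnit a)
    (hj : j ∈ jacobson (⊥ : Ideal R)) : IsUnit (a + j) := by
  obtain ⟨v, rfl⟩ := ha
  have h : (v : R) + j = v * (1 + ↑v⁻¹ * j) := by
    rw [mul_add, mul_one, ← mul_assoc, Units.mul_inv, one_mul]
  rw [h]
  exact v.isUnit.mul (isUnit_one_add_of_mem_jacobson_bot (mul_mem_left _ _ hj))

theorem star_mem_jacobson_bot [StarRing R] (hx : x ∈ jacobson (⊥ : Ideal R)) :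
    star x ∈ jacobson (⊥ : Ideal R) := by
  refine mem_jacobson_bot_of_forall_isUnit_one_add_mul fun y ↦ ?_
  have h := (isUnit_one_add_of_mem_jacobson_bot (mul_mem_right (star y) _ hx)).star
  rwa [star_add, star_one, star_mul, star_star] at h

theorem _root_.IsIdempotentElem.mem_jacobson_bot {e : R} (he : IsIdempotentElem e)
    (h_unit : IsUnit (1 + e)) (h_two : (2 : R) ∈ jacobson (⊥ : Ideal R)) :
    e ∈ jacobson (⊥ : Ideal R) := by
  obtain ⟨v, hv⟩ := h_unit
  have h : e = ↑v⁻¹ * (e * 2) := by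
    calc e = ↑v⁻¹ * (↑v * e) := by rw [← mul_assoc, Units.inv_mul, one_mul]
      _ = ↑v⁻¹ * (e * 2) := by rw [hv, one_add_mul, he.eq, mul_two]
  rw [h]
  exact mul_mem_left _ _ (mul_mem_left _ e h_two)

end Ideal

open Ideal

namespace StronglyJStarClean

variable {R : Type*} [Ring R] [StarRing R]

theorem two_mem_jacobson (h : StronglyJStarClean R) : (2 : R) ∈ jacobson (⊥ : Ideal R) := by
  obtain ⟨f, w, hf, -, hw, hfw, -⟩ := h (-1)
  have hf_eq : f = -1 + -w := by rw [hfw]; abel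
  have hf_one : f = 1 :=
    (IsIdempotentElem.iff_eq_one_of_isUnit
      (hf_eq ▸ isUnit_one.neg.add_mem_jacobson_bot (neg_mem hw))).mp hf
  have h_two_add : (2 : R) + w = 0 := by
    rw [hf_one] at hfw
    rw [← one_add_one_eq_two, add_assoc, ← hfw, add_neg_cancel]
  exact eq_neg_of_add_eq_zero_left h_two_add ▸ neg_mem hw

end StronglyJStarClean

theorem stmt_15 (R : Type*) [Ring R] [StarRing R] (h : StronglyJStarClean R) :
    ∀ x : R, IsUnit (1 + x * star x) → x ∈ Ideal.jacobson (⊥ : Ideal R) := by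
  intro x hx
  obtain ⟨e, u, he, he_star, hu, rfl, -⟩ := h x
  have hj : e * star u + u * star (e + u) ∈ jacobson (⊥ : Ideal R) :=
    add_mem (mul_mem_left _ e (star_mem_jacobson_bot hu)) (mul_mem_right _ _ hu)
  have h_one_add : 1 + e = 1 + (e + u) * star (e + u) + -(e * star u + u * star (e + u)) := by
    calc 1 + e = 1 + e * e := by rw [he]
      _ = _ := by rw [star_add, he_star]; noncomm_ring
  have he_mem : e ∈ jacobson (⊥ : Ideal R) :=
    IsIdempotentElem.mem_jacobson_bot he (h_one_add ▸ hx.add_mem_jacobson_bot (neg_mem hj))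
      h.two_mem_jacobson
  exact add_mem he_mem hu
end
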